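/- Explicit formula for T₋₂(p) (Vasiga–Shallit): let p be an odd prime, let d₁ be the odd part of p − 1 and d₂ the odd part of p + 1. Then the number of periodic points of the map f₋₂(x) = x² − 2 on ZMod p equals (d₁ + d₂)/2. -/

import Mathlib

/-!
Over a field `K` with `p²` elements every `x ∈ 𝔽_p` is `u + u⁻¹` for some `u ∈ Kˣ`, unique up to
`u ↦ u⁻¹`, and `x ^ p = x` says exactly that `u ^ (p - 1) = 1` or `u ^ (p + 1) = 1`. As
`(u + u⁻¹) ^ 2 - 2 = u ^ 2 + u⁻¹ ^ 2`, the point `x` is periodic iff `u` is periodic under squaring,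
i.e. iff `u` has odd order. Hence the periodic points are the `u + u⁻¹` with `u ^ d₁ = 1` or
`u ^ d₂ = 1`. In the cyclic group `Kˣ` of order `p² - 1` there are `d₁ + d₂ - 1` such `u`
(`d₁` and `d₂` are coprime), and they come in pairs `{u, u⁻¹}` apart from `u = 1`.
-/

open Function

theorem Nat.coprime_of_dvd_of_dvd_add_two {m a b : ℕ} (ha : Odd a) (ham : a ∣ m)
    (hbm : b ∣ m + 2) : a.Coprime b := by
  have hdvd : a.gcd b ∣ 2 := by
    simpa using Nat.dvd_sub ((Nat.gcd_dvd_right a b).trans hbm) ((Nat.gcd_dvd_left a b).trans ham)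
  exact Nat.Coprime.eq_one_of_dvd (ha.of_dvd_nat (Nat.gcd_dvd_left a b)).coprime_two_right hdvd

theorem Function.Semiconj.image_periodicPts {α β : Type*} {fa : α → α} {fb : β → β}
    {g : α → β} (h : Semiconj g fa fb) (hg : Injective g) :
    g '' periodicPts fa = Set.range g ∩ periodicPts fb := by
  have hmem (x : α) : g x ∈ periodicPts fb ↔ x ∈ periodicPts fa := by
    simp only [mem_periodicPts, IsPeriodicPt, IsFixedPt, ← h.iterate_right _ x, hg.eq_iff]
  ext y
  constructor
  · rintro ⟨x, hx, rfl⟩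
    exact ⟨⟨x, rfl⟩, (hmem x).mpr hx⟩
  · rintro ⟨⟨x, rfl⟩, hy⟩
    exact ⟨x, (hmem x).mp hy, rfl⟩

section Powers

variable {G : Type*}

theorem pow_two_pow_mul_eq_one_and_odd_orderOf_iff [Monoid G] {g : G} {e d : ℕ} (hd : Odd d) :
    g ^ (2 ^ e * d) = 1 ∧ Odd (orderOf g) ↔ g ^ d = 1 := by
  refine ⟨fun ⟨h, hodd⟩ => orderOf_dvd_iff_pow_eq_one.mp ?_, fun h => ⟨?_, ?_⟩⟩
  · exact (hodd.coprime_two_right.pow_right e).dvd_of_dvd_mul_left (orderOf_dvd_of_pow_eq_one h)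
  · rw [mul_comm, pow_mul, h, one_pow]
  · exact hd.of_dvd_nat (orderOf_dvd_of_pow_eq_one h)

theorem mem_periodicPts_sq_iff_odd_orderOf [Group G] [Finite G] {g : G} :
    g ∈ periodicPts (fun x : G => x ^ 2) ↔ Odd (orderOf g) := by
  simp only [mem_periodicPts, IsPeriodicPt, IsFixedPt, pow_iterate]
  constructor
  · rintro ⟨n, hn, h⟩
    have hmod : 2 ^ n ≡ 1 [MOD orderOf g] := pow_eq_pow_iff_modEq.mp (h.trans (pow_one g).symm)
    have hodd : Odd (2 ^ n - 1) :=
      Nat.Even.sub_odd Nat.one_le_two_pow (Nat.even_pow.mpr ⟨even_two, hn.ne'⟩) odd_one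
    exact hodd.of_dvd_nat ((Nat.modEq_iff_dvd' Nat.one_le_two_pow).mp hmod.symm)
  · intro hodd
    refine ⟨(orderOf g).totient, Nat.totient_pos.mpr (orderOf_pos g), ?_⟩
    conv_rhs => rw [← pow_one g]
    exact pow_eq_pow_iff_modEq.mpr (Nat.ModEq.pow_totient (Nat.coprime_two_left.mpr hodd))

theorem IsCyclic.ncard_pow_eq_one_or_pow_eq_one [CommGroup G] [IsCyclic G] [Finite G]
    {m n : ℕ} (hm : m ∣ Nat.card G) (hn : n ∣ Nat.card G) (hmn : m.Coprime n) :
    {g : G | g ^ m = 1 ∨ g ^ n = 1}.ncard + 1 = m + n := by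
  have hcard {d : ℕ} (hd : d ∣ Nat.card G) : {g : G | g ^ d = 1}.ncard = d := by
    have := IsCyclic.card_powMonoidHom_ker G d
    rwa [Nat.gcd_eq_right hd, ← SetLike.coe_sort_coe, Nat.card_coe_set_eq] at this
  have hinter : {g : G | g ^ m = 1} ∩ {g | g ^ n = 1} = {1} := by
    ext g
    simp only [Set.mem_inter_iff, Set.mem_ofPred_eq, Set.mem_singleton_iff]
    refine ⟨fun ⟨h₁, h₂⟩ => ?_, fun h => by simp [h]⟩
    simpa [Nat.Coprime.gcd_eq_one hmn] using pow_gcd_eq_one.mpr ⟨h₁, h₂⟩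
  rw [Set.ofPred_or, ← Set.ncard_singleton (1 : G), ← hinter, Set.ncard_union_add_ncard_inter,
    hcard hm, hcard hn]

end Powers

namespace Units

variable {K : Type*} [Field K]

theorem add_inv_eq_add_inv_iff {u v : Kˣ} : (u + u⁻¹ : K) = v + v⁻¹ ↔ u = v ∨ u = v⁻¹ := by
  have key : (u * v : K) * ((u + u⁻¹ : K) - (v + v⁻¹)) = (u - v) * (u * v - 1) := by
    simp only [val_inv_eq_inv_val]
    field_simp
    ring
  rw [← sub_eq_zero, ← mul_right_inj' (by simp : (u * v : K) ≠ 0), mul_zero, key, mul_eq_zero,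
    sub_eq_zero, sub_eq_zero, eq_inv_iff_mul_eq_one, Units.ext_iff, Units.ext_iff, val_mul,
    val_one]

theorem semiconj_add_inv_sq :
    Semiconj (fun u : Kˣ => (u + u⁻¹ : K)) (fun u => u ^ 2) (fun x => x ^ 2 - 2) := by
  intro u
  simp only [val_pow_eq_pow_val, val_inv_eq_inv_val]
  field_simp
  ring

theorem add_inv_mem_periodicPts_iff {u : Kˣ} :
    (u + u⁻¹ : K) ∈ periodicPts (fun x : K => x ^ 2 - 2) ↔
      u ∈ periodicPts (fun v : Kˣ => v ^ 2) := by
  refine ⟨fun ⟨n, hn, h⟩ => ?_, fun h => semiconj_add_inv_sq.mapsTo_periodicPts h⟩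
  rw [IsPeriodicPt, IsFixedPt, ← semiconj_add_inv_sq.iterate_right n u, pow_iterate,
    add_inv_eq_add_inv_iff] at h
  beta_reduce at h
  rcases h with h | h
  · exact mk_mem_periodicPts hn (by simp only [IsPeriodicPt, IsFixedPt, pow_iterate, h])
  · refine mk_mem_periodicPts (by omega : 0 < n + n) ?_
    simp only [IsPeriodicPt, IsFixedPt, pow_iterate]
    rw [pow_add, pow_mul, h, inv_pow, h, inv_inv]

theorem exists_add_inv_eq (h2 : (2 : K) ≠ 0) {x : K} (hx : IsSquare (x ^ 2 - 4)) :
    ∃ u : Kˣ, (u + u⁻¹ : K) = x := by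
  obtain ⟨s, hs⟩ := hx
  have hmul : (x + s) / 2 * ((x - s) / 2) = 1 := by
    field_simp
    linear_combination hs
  refine ⟨⟨(x + s) / 2, (x - s) / 2, hmul, by rw [mul_comm, hmul]⟩, ?_⟩
  simp only [inv_mk]
  field_simp
  ring

theorem add_inv_pow_char_eq_self_iff (p : ℕ) [Fact p.Prime] [CharP K p] {u : Kˣ} :
    (u + u⁻¹ : K) ^ p = u + u⁻¹ ↔ u ^ (p - 1) = 1 ∨ u ^ (p + 1) = 1 := by
  rw [add_pow_char, ← val_pow_eq_pow_val, ← val_pow_eq_pow_val, inv_pow, add_inv_eq_add_inv_iff]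
  refine or_congr ?_ ?_
  · rw [← pow_sub_one_mul (Fact.out : p.Prime).ne_zero, mul_eq_right]
  · rw [pow_succ, _root_.mul_eq_one_iff_eq_inv]

open Finset in
theorem two_mul_ncard_image_add_inv {S : Set Kˣ} (hS : S.Finite)
    (hinv : ∀ u ∈ S, u⁻¹ ∈ S) (h1 : 1 ∈ S) (hneg : -1 ∉ S) :
    2 * ((fun u : Kˣ => (u + u⁻¹ : K)) '' S).ncard = S.ncard + 1 := by
  classical
  lift S to Finset Kˣ using hS
  set J := fun u : Kˣ => (u + u⁻¹ : K)
  rw [← coe_image, Set.ncard_coe_finset, Set.ncard_coe_finset]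
  have hfiber : ∀ b ∈ S.image J, #{u ∈ S | J u = b} + (if b = J 1 then 1 else 0) = 2 := by
    simp only [mem_image]
    rintro _ ⟨u, hu, rfl⟩
    have hfib : {v ∈ S | J v = J u} = {u, u⁻¹} := by
      ext v
      simp only [J, mem_filter, add_inv_eq_add_inv_iff, mem_insert, mem_singleton]
      exact ⟨And.right, fun h => ⟨h.elim (· ▸ hu) (· ▸ hinv u hu), h⟩⟩
    rw [hfib]
    by_cases hu1 : u = 1
    · simp [hu1]
    · have hu : u ≠ u⁻¹ := fun h => by
        rcases (inv_eq_self_iff u).mp h.symm with h | h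
        exacts [hu1 h, hneg (h ▸ hu)]
      have hJ : J u ≠ J 1 := fun h => hu1 (by simpa using add_inv_eq_add_inv_iff.mp h)
      rw [card_pair hu, if_neg hJ]
  calc 2 * #(S.image J)
      = ∑ b ∈ S.image J, (#{u ∈ S | J u = b} + if b = J 1 then 1 else 0) := by
        rw [sum_congr rfl hfiber, sum_const, nsmul_eq_mul, Nat.cast_id, mul_comm]
    _ = #S + 1 := by
        rw [sum_add_distrib, ← card_eq_sum_card_image, sum_ite_eq',
          if_pos (mem_image_of_mem J h1)]

theorem two_mul_ncard_image_add_inv_pow_eq_one_or [Finite K] (hK : ringChar K ≠ 2) {m n : ℕ}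
    (hm : Odd m) (hn : Odd n) (hmK : m ∣ Nat.card Kˣ) (hnK : n ∣ Nat.card Kˣ)
    (hmn : m.Coprime n) :
    2 * ((fun u : Kˣ => (u + u⁻¹ : K)) '' {u | u ^ m = 1 ∨ u ^ n = 1}).ncard = m + n := by
  have hneg : (-1 : Kˣ) ≠ 1 := fun h =>
    Ring.neg_one_ne_one_of_char_ne_two hK (by simpa using congrArg val h)
  have hinv {d : ℕ} {u : Kˣ} (h : u ^ d = 1) : u⁻¹ ^ d = 1 := by rw [inv_pow, h, inv_one]
  rw [two_mul_ncard_image_add_inv (Set.toFinite _) (fun u hu => hu.imp hinv hinv)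
      (Or.inl (one_pow _)) (by simp [hm.neg_one_pow, hn.neg_one_pow, hneg]),
    IsCyclic.ncard_pow_eq_one_or_pow_eq_one hmK hnK hmn]

end Units

namespace ZMod

variable {p : ℕ} [Fact p.Prime] {K : Type*} [Field K] [CharP K p]

theorem mem_range_castHom_iff_pow_eq_self {x : K} :
    x ∈ Set.range (castHom (dvd_refl p) K) ↔ x ^ p = x := by
  rw [← Subfield.mem_bot_iff_pow_eq_self K p, ← fieldRange_castHom_eq_bot p]
  rfl

variable [Finite K]

theorem isSquare_castHom_of_card_eq_sq (hp : p ≠ 2) (hK : Nat.card K = p ^ 2) (a : ZMod p) :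
    IsSquare (castHom (dvd_refl p) K a) := by
  rcases eq_or_ne a 0 with rfl | ha
  · exact ⟨0, by simp⟩
  have := Fintype.ofFinite K
  rw [FiniteField.isSquare_iff (by rwa [ringChar.eq K p]) ((map_ne_zero _).mpr ha),
    Fintype.card_eq_nat_card, hK]
  obtain ⟨k, rfl⟩ := (Fact.out : p.Prime).odd_of_ne_two hp
  -- `p ^ 2 / 2 = (p - 1) * ((p + 1) / 2)` and `a ^ (p - 1) = 1`
  have hexp : (2 * k + 1) ^ 2 / 2 = (2 * k + 1 - 1) * (k + 1) := by
    rw [show (2 * k + 1) ^ 2 = 2 * ((2 * k + 1 - 1) * (k + 1)) + 1 by simp; ring]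
    omega
  rw [hexp, pow_mul, ← map_pow, pow_card_sub_one_eq_one ha, map_one, one_pow]

theorem range_castHom_eq_image_add_inv (hp : p ≠ 2) (hK : Nat.card K = p ^ 2) :
    Set.range (castHom (dvd_refl p) K) =
      (fun u : Kˣ => (u + u⁻¹ : K)) '' {u | u ^ (p - 1) = 1 ∨ u ^ (p + 1) = 1} := by
  ext y
  constructor
  · rintro ⟨a, rfl⟩
    have hsq := isSquare_castHom_of_card_eq_sq hp hK (a ^ 2 - 4)
    rw [map_sub, map_pow, map_ofNat] at hsq
    obtain ⟨u, hu⟩ := Units.exists_add_inv_eq (Ring.two_ne_zero (by rwa [ringChar.eq K p])) hsq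
    refine ⟨u, ?_, hu⟩
    rw [Set.mem_ofPred_eq, ← Units.add_inv_pow_char_eq_self_iff p, hu, ← map_pow, pow_card]
  · rintro ⟨u, hu, rfl⟩
    rwa [mem_range_castHom_iff_pow_eq_self, Units.add_inv_pow_char_eq_self_iff]

theorem image_castHom_periodicPts_sq_sub_two (hp : p ≠ 2) (hK : Nat.card K = p ^ 2)
    {e₁ d₁ e₂ d₂ : ℕ} (hd₁ : Odd d₁) (hd₂ : Odd d₂) (h₁ : p - 1 = 2 ^ e₁ * d₁)
    (h₂ : p + 1 = 2 ^ e₂ * d₂) :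
    castHom (dvd_refl p) K '' periodicPts (fun x : ZMod p => x ^ 2 - 2) =
      (fun u : Kˣ => (u + u⁻¹ : K)) '' {u | u ^ d₁ = 1 ∨ u ^ d₂ = 1} := by
  have hsemiconj : Semiconj (castHom (dvd_refl p) K) (fun x => x ^ 2 - 2) (fun x => x ^ 2 - 2) :=
    fun x => by simp only [map_sub, map_pow, map_ofNat]
  rw [hsemiconj.image_periodicPts (castHom (dvd_refl p) K).injective,
    range_castHom_eq_image_add_inv hp hK, ← Set.image_inter_preimage]
  congr! 1
  ext u
  simp only [Set.mem_inter_iff, Set.mem_preimage, Units.add_inv_mem_periodicPts_iff,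
    mem_periodicPts_sq_iff_odd_orderOf, Set.mem_ofPred_eq]
  rw [h₁, h₂, or_and_right, pow_two_pow_mul_eq_one_and_odd_orderOf_iff hd₁,
    pow_two_pow_mul_eq_one_and_odd_orderOf_iff hd₂]

end ZMod

theorem card_periodicPts_sq_sub_two (p : ℕ) [Fact p.Prime] (hp : p ≠ 2)
    (e₁ d₁ e₂ d₂ : ℕ) (hd₁ : Odd d₁) (hd₂ : Odd d₂)
    (h₁ : p - 1 = 2 ^ e₁ * d₁) (h₂ : p + 1 = 2 ^ e₂ * d₂) :
    (Function.periodicPts (fun x : ZMod p => x ^ 2 - 2)).ncard = (d₁ + d₂) / 2 := by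
  let F := GaloisField p 2
  have hF : Nat.card F = p ^ 2 := GaloisField.card p 2 two_ne_zero
  have hunits : Nat.card Fˣ = (p + 1) * (p - 1) := by
    rw [Nat.card_units, hF, ← Nat.sq_sub_sq, one_pow]
  have hd₁p : d₁ ∣ p - 1 := Dvd.intro_left _ h₁.symm
  have hd₂p : d₂ ∣ p + 1 := Dvd.intro_left _ h₂.symm
  have hp1 : p - 1 + 2 = p + 1 := by have := (Fact.out : p.Prime).one_le; omega
  have hcoprime : d₁.Coprime d₂ := Nat.coprime_of_dvd_of_dvd_add_two hd₁ hd₁p (hp1 ▸ hd₂p)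
  have hcount := Units.two_mul_ncard_image_add_inv_pow_eq_one_or (by rwa [ringChar.eq F p])
    hd₁ hd₂ (hd₁p.trans (Dvd.intro_left _ hunits.symm)) (hd₂p.trans (Dvd.intro _ hunits.symm))
    hcoprime
  rw [← Set.ncard_image_of_injective _ (ZMod.castHom (dvd_refl p) F).injective,
    ZMod.image_castHom_periodicPts_sq_sub_two hp hF hd₁ hd₂ h₁ h₂]
  omega
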